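/- arXiv:0809.2167 — 7 statements merged into one kernel-verified Lean document; each statement's English description precedes it below -/
import Mathlib

section
/- Let Y₀ > 0 and M > 0, and let Ψ be holomorphic on H = {W ∈ ℂ : Im W < −Y₀}, commuting with T₁ (Ψ(W+1) = Ψ(W)+1), with |Ψ(W) − W| ≤ M for all W ∈ H. Then the image Ψ(H) contains the half-plane {W ∈ ℂ : Im W < −(Y₀ + M + 1)}. -/
open Complex Metric

/-!
Since `Ψ` commutes with `T₁` it is not constant, so by the open mapping theorem `Ψ(H)` is open.
It is also relatively closed in the half-plane `P = {Im W < -(Y₀ + M + 1)}`: the approximate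
preimages of a limit point `w ∈ P` of `Ψ(H)` lie, since `|Ψ(W) - W| ≤ M`, in the compact disc
`closedBall w (M + 1) ⊆ H`, whose image under `Ψ` is compact. As `P` is connected and meets
`Ψ(H)`, it lies in `Ψ(H)`.
-/

theorem DifferentiableOn.isOpen_image_of_ne {f : ℂ → ℂ} {U : Set ℂ} (hf : DifferentiableOn ℂ f U)
    (hU : IsOpen U) (hUc : IsPreconnected U) {z z' : ℂ} (hz : z ∈ U) (hz' : z' ∈ U)
    (hne : f z ≠ f z') : IsOpen (f '' U) := by
  rcases (hf.analyticOnNhd hU).is_constant_or_isOpen hUc with ⟨c, hc⟩ | hopen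
  · exact absurd ((hc z hz).trans (hc z' hz').symm) hne
  · exact hopen U subset_rfl hU

theorem mem_image_of_mem_closure_image {X : Type*} [MetricSpace X] [ProperSpace X] {Ψ : X → X}
    {U : Set X} {M r : ℝ} {w : X} (hΨ : ContinuousOn Ψ U) (hbdd : ∀ W ∈ U, dist (Ψ W) W ≤ M)
    (hMr : M < r) (hball : closedBall w r ⊆ U) (hw : w ∈ closure (Ψ '' U)) : w ∈ Ψ '' U := by
  have hclosed : IsClosed (Ψ '' closedBall w r) :=
    ((isCompact_closedBall w r).image_of_continuousOn (hΨ.mono hball)).isClosed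
  suffices w ∈ closure (Ψ '' closedBall w r) from Set.image_mono hball (hclosed.closure_eq ▸ this)
  rw [Metric.mem_closure_iff] at hw ⊢
  intro ε hε
  obtain ⟨_, ⟨W, hW, rfl⟩, hdist⟩ := hw (min ε (r - M)) (lt_min hε (sub_pos.2 hMr))
  refine ⟨Ψ W, ⟨W, mem_closedBall.2 ?_, rfl⟩, hdist.trans_le (min_le_left _ _)⟩
  calc dist W w ≤ dist W (Ψ W) + dist w (Ψ W) := dist_triangle_right _ _ _
    _ ≤ r := by linarith [dist_comm W (Ψ W), hbdd W hW, hdist.trans_le (min_le_right _ _)]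

theorem closedBall_subset_setOf_im_lt {w : ℂ} {r a : ℝ} (h : w.im + r < a) :
    closedBall w r ⊆ {W : ℂ | W.im < a} := by
  intro W hW
  have hle := (abs_le.1 ((abs_im_le_norm (W - w)).trans (mem_closedBall_iff_norm.1 hW))).2
  rw [sub_im] at hle
  show W.im < a
  linarith

theorem stmt_4_general (Y₀ M : ℝ) (hM : 0 < M) (Ψ : ℂ → ℂ)
    (hhol : DifferentiableOn ℂ Ψ {W : ℂ | W.im < -Y₀})
    (hcomm : ∀ W : ℂ, W.im < -Y₀ → Ψ (W + 1) = Ψ W + 1)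
    (hbdd : ∀ W : ℂ, W.im < -Y₀ → ‖Ψ W - W‖ ≤ M) :
    {w : ℂ | w.im < -(Y₀ + M + 1)} ⊆ Ψ '' {W : ℂ | W.im < -Y₀} := by
  have hdist : ∀ W ∈ {W : ℂ | W.im < -Y₀}, dist (Ψ W) W ≤ M :=
    fun W hW => (dist_eq_norm _ _).trans_le (hbdd W hW)
  set W₁ : ℂ := -(Y₀ + 2 * M + 2) * I
  have hW₁im : W₁.im = -(Y₀ + 2 * M + 2) := by simp [W₁]
  have hW₁ : W₁.im < -Y₀ := by linarith
  have hopen : IsOpen (Ψ '' {W : ℂ | W.im < -Y₀}) :=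
    hhol.isOpen_image_of_ne (isOpen_im_lt _) (convex_halfSpace_im_lt _).isPreconnected
      (z := W₁ + 1) (by simpa using hW₁) hW₁ (by simp [hcomm W₁ hW₁])
  refine (convex_halfSpace_im_lt _).isPreconnected.subset_of_closure_inter_subset hopen
    ⟨Ψ W₁, ?_, W₁, hW₁, rfl⟩ ?_
  · exact closedBall_subset_setOf_im_lt (by linarith) (mem_closedBall.2 (hdist W₁ hW₁))
  · rintro w ⟨hw_cl, hw⟩
    have hw : w.im < -(Y₀ + M + 1) := hw
    exact mem_image_of_mem_closure_image hhol.continuousOn hdist (lt_add_one M)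
      (closedBall_subset_setOf_im_lt (by linarith)) hw_cl

/-- The image of a lower half-plane under a near-identity map commuting with `T₁`
contains a lower half-plane. -/
theorem stmt_4 (Y₀ M : ℝ) (hY₀ : 0 < Y₀) (hM : 0 < M) (Ψ : ℂ → ℂ)
    (hhol : DifferentiableOn ℂ Ψ {W : ℂ | W.im < -Y₀})
    (hcomm : ∀ W : ℂ, W.im < -Y₀ → Ψ (W + 1) = Ψ W + 1)
    (hbdd : ∀ W : ℂ, W.im < -Y₀ → ‖Ψ W - W‖ ≤ M) :
    {w : ℂ | w.im < -(Y₀ + M + 1)} ⊆ Ψ '' {W : ℂ | W.im < -Y₀} :=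
  stmt_4_general Y₀ M hM Ψ hhol hcomm hbdd
end

section
/- Let Y > 0 and let Ψ be holomorphic on H = {W ∈ ℂ : Im W < −Y}, commuting with T₁ (Ψ(W+1) = Ψ(W)+1), with Ψ − id bounded on H. Then: (1) there exists c ∈ ℂ such that Ψ(W) − W → c as Im W → −∞, uniformly in Re W; (2) there exists a unique holomorphic function ψ on the disc D = {w ∈ ℂ : |w| < e^{−2πY}} such that ψ(0) = 0 and ψ(exp(−2πiW)) = exp(−2πiΨ(W)) for all W ∈ H; and (3) ψ′(0) = exp(−2πic). -/
open Filter Complex Function Periodic Set Metric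
open scoped Real Topology

/-! `Ψ W - W` is `1`-periodic, holomorphic and bounded on the half-plane, so it factors through
`E W = exp (-2πiW)` as a bounded holomorphic function `F` on the punctured disc. By Riemann's
removable singularity theorem `F` extends over `0`, and `c := F 0` is the limit of `Ψ W - W`.
Then `ψ w = w · exp (-2πi F w)` satisfies `ψ ∘ E = E ∘ Ψ` because
`E (W + (Ψ W - W)) = E W · E (Ψ W - W)`, and `ψ' 0 = exp (-2πi F 0)`. Uniqueness holds because `E`
maps the half-plane onto the punctured disc. -/

theorem Function.Periodic.indicator_of_periodicOn {α β : Type*} [Add α] [Zero β] {s : Set α}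
    {f : α → β} {c : α} (hs : ∀ x, x + c ∈ s ↔ x ∈ s) (hf : ∀ x ∈ s, f (x + c) = f x) :
    Periodic (s.indicator f) c := by
  intro x
  by_cases hx : x ∈ s
  · rw [indicator_of_mem ((hs x).2 hx), indicator_of_mem hx, hf x hx]
  · rw [indicator_of_notMem (mt (hs x).1 hx), indicator_of_notMem hx]

namespace Function.Periodic

variable {h Y : ℝ} {f : ℂ → ℂ}

theorem exists_qParam_eq_of_norm_lt (hh : 0 < h) {q : ℂ} (hq : q ≠ 0)
    (hqY : ‖q‖ < Real.exp (-2 * π * Y / h)) : ∃ z, Y < z.im ∧ qParam h z = q :=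
  ⟨invQParam h q, (norm_qParam_lt_iff hh Y _).1 (by rwa [qParam_right_inv hh.ne' hq]),
    qParam_right_inv hh.ne' hq⟩

theorem eventually_differentiableAt_of_differentiableOn
    (hf : DifferentiableOn ℂ f {z | Y < z.im}) :
    ∀ᶠ z in comap im atTop, DifferentiableAt ℂ f z := by
  filter_upwards [preimage_mem_comap (Ioi_mem_atTop Y)] with z hz
  exact hf.differentiableAt ((isOpen_lt continuous_const continuous_im).mem_nhds hz)

theorem differentiableOn_cuspFunction_ball (hh : 0 < h) (hf : Periodic f h)
    (hhol : DifferentiableOn ℂ f {z | Y < z.im}) (hbd : BoundedAtFilter (comap im atTop) f) :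
    DifferentiableOn ℂ (cuspFunction h f) (ball 0 (Real.exp (-2 * π * Y / h))) := by
  have hopen : IsOpen {z : ℂ | Y < z.im} := isOpen_lt continuous_const continuous_im
  refine fun q hq ↦ DifferentiableAt.differentiableWithinAt ?_
  rcases eq_or_ne q 0 with rfl | hq0
  · exact differentiableAt_cuspFunction_zero hh hf
      (eventually_differentiableAt_of_differentiableOn hhol) hbd
  · obtain ⟨z, hz, rfl⟩ := exists_qParam_eq_of_norm_lt hh hq0 (mem_ball_zero_iff.1 hq)
    exact differentiableAt_cuspFunction hh.ne' hf (hhol.differentiableAt (hopen.mem_nhds hz))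

end Function.Periodic

theorem qParam_one_neg (W : ℂ) : qParam 1 (-W) = exp (-(2 * π * I * W)) := by
  simp [qParam]

theorem exists_im_lt_exp_eq {Y : ℝ} {w : ℂ} (hw : w ≠ 0) (hwY : ‖w‖ < Real.exp (-(2 * π * Y))) :
    ∃ W : ℂ, W.im < -Y ∧ exp (-(2 * π * I * W)) = w := by
  obtain ⟨z, hz, rfl⟩ := exists_qParam_eq_of_norm_lt one_pos hw (Y := Y) (by simpa using hwY)
  exact ⟨-z, by simpa using hz, by rw [← qParam_one_neg, neg_neg]⟩

theorem eqOn_ball_of_comp_exp_eq {Y : ℝ} {ψ₁ ψ₂ : ℂ → ℂ} (h0 : ψ₁ 0 = ψ₂ 0)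
    (h : ∀ W : ℂ, W.im < -Y → ψ₁ (exp (-(2 * π * I * W))) = ψ₂ (exp (-(2 * π * I * W)))) :
    EqOn ψ₁ ψ₂ (ball 0 (Real.exp (-(2 * π * Y)))) := by
  intro w hw
  rcases eq_or_ne w 0 with rfl | hw0
  · exact h0
  · obtain ⟨W, hW, rfl⟩ := exists_im_lt_exp_eq hw0 (mem_ball_zero_iff.1 hw)
    exact h W hW

section Descent

variable {Y : ℝ} {Ψ : ℂ → ℂ}

/-- `Ψ W - W` read at `W = -z`, which turns the lower half-plane into the neighbourhood of `i∞`
where `Function.Periodic.cuspFunction` works; `E W = qParam 1 (-W)`. -/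
noncomputable def translationPart (Y : ℝ) (Ψ : ℂ → ℂ) : ℂ → ℂ :=
  {z : ℂ | Y < z.im}.indicator fun z ↦ Ψ (-z) + z

theorem translationPart_neg {W : ℂ} (hW : W.im < -Y) : translationPart Y Ψ (-W) = Ψ W - W := by
  rw [translationPart, indicator_of_mem (by simpa [lt_neg] using hW), neg_neg, sub_eq_add_neg]

theorem periodic_translationPart (hcomm : ∀ W : ℂ, W.im < -Y → Ψ (W + 1) = Ψ W + 1) :
    Periodic (translationPart Y Ψ) 1 := by
  refine Periodic.indicator_of_periodicOn (by simp) fun z hz ↦ ?_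
  have := hcomm (-(z + 1)) (by simpa [neg_lt_neg_iff] using hz)
  rw [show -(z + 1) + 1 = -z by ring] at this
  linear_combination -this

theorem differentiableOn_translationPart (hhol : DifferentiableOn ℂ Ψ {W : ℂ | W.im < -Y}) :
    DifferentiableOn ℂ (translationPart Y Ψ) {z | Y < z.im} := by
  have hΨ : DifferentiableOn ℂ (fun z ↦ Ψ (-z) + z) {z : ℂ | Y < z.im} :=
    (hhol.comp (differentiableOn_neg _) fun z hz ↦ by simpa [neg_lt_neg_iff] using hz).add
      differentiableOn_id
  exact hΨ.congr fun z hz ↦ indicator_of_mem hz _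

theorem boundedAtFilter_translationPart (hbdd : ∃ M : ℝ, ∀ W : ℂ, W.im < -Y → ‖Ψ W - W‖ ≤ M) :
    BoundedAtFilter (comap im atTop) (translationPart Y Ψ) := by
  obtain ⟨M, hM⟩ := hbdd
  refine Asymptotics.IsBigO.of_bound M ?_
  filter_upwards [preimage_mem_comap (Ioi_mem_atTop Y)] with z hz
  have hW : (-z).im < -Y := by simpa using hz
  simpa [← translationPart_neg hW] using hM _ hW

theorem tendsto_sub_self_comap_im_atBot
    (hhol : DifferentiableOn ℂ Ψ {W : ℂ | W.im < -Y})
    (hcomm : ∀ W : ℂ, W.im < -Y → Ψ (W + 1) = Ψ W + 1)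
    (hbdd : ∃ M : ℝ, ∀ W : ℂ, W.im < -Y → ‖Ψ W - W‖ ≤ M) :
    Tendsto (fun W ↦ Ψ W - W) (comap im atBot)
      (𝓝 (cuspFunction 1 (translationPart Y Ψ) 0)) := by
  have hneg : Tendsto Neg.neg (comap im atBot) (comap im atTop) :=
    tendsto_comap_iff.2 <| by
      simpa [comp_def] using (tendsto_neg_atBot_atTop (G := ℝ)).comp tendsto_comap
  refine ((tendsto_at_I_inf one_pos (periodic_translationPart hcomm)
    (eventually_differentiableAt_of_differentiableOn (differentiableOn_translationPart hhol))
    (boundedAtFilter_translationPart hbdd)).comp hneg).congr' ?_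
  filter_upwards [preimage_mem_comap (Iio_mem_atBot (-Y))] with W hW
  exact translationPart_neg hW

noncomputable def descent (Y : ℝ) (Ψ : ℂ → ℂ) (w : ℂ) : ℂ :=
  w * exp (-(2 * π * I * cuspFunction 1 (translationPart Y Ψ) w))

theorem descent_zero : descent Y Ψ 0 = 0 := by
  simp [descent]

theorem descent_exp (hcomm : ∀ W : ℂ, W.im < -Y → Ψ (W + 1) = Ψ W + 1) {W : ℂ}
    (hW : W.im < -Y) : descent Y Ψ (exp (-(2 * π * I * W))) = exp (-(2 * π * I * Ψ W)) := by
  rw [descent, ← qParam_one_neg, eq_cuspFunction one_ne_zero (periodic_translationPart hcomm),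
    translationPart_neg hW, qParam_one_neg, ← exp_add]
  ring_nf

theorem differentiableOn_descent
    (hhol : DifferentiableOn ℂ Ψ {W : ℂ | W.im < -Y})
    (hcomm : ∀ W : ℂ, W.im < -Y → Ψ (W + 1) = Ψ W + 1)
    (hbdd : ∃ M : ℝ, ∀ W : ℂ, W.im < -Y → ‖Ψ W - W‖ ≤ M) :
    DifferentiableOn ℂ (descent Y Ψ) (ball 0 (Real.exp (-(2 * π * Y)))) := by
  have hF := differentiableOn_cuspFunction_ball one_pos (periodic_translationPart hcomm)
    (differentiableOn_translationPart hhol) (boundedAtFilter_translationPart hbdd)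
  rw [show -2 * π * Y / 1 = -(2 * π * Y) by ring] at hF
  exact differentiableOn_id.mul (hF.const_mul _).neg.cexp

theorem deriv_descent_zero
    (hhol : DifferentiableOn ℂ Ψ {W : ℂ | W.im < -Y})
    (hcomm : ∀ W : ℂ, W.im < -Y → Ψ (W + 1) = Ψ W + 1)
    (hbdd : ∃ M : ℝ, ∀ W : ℂ, W.im < -Y → ‖Ψ W - W‖ ≤ M) :
    deriv (descent Y Ψ) 0 = exp (-(2 * π * I * cuspFunction 1 (translationPart Y Ψ) 0)) := by
  have hF := differentiableAt_cuspFunction_zero one_pos (periodic_translationPart hcomm)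
    (eventually_differentiableAt_of_differentiableOn (differentiableOn_translationPart hhol))
    (boundedAtFilter_translationPart hbdd)
  unfold descent
  simpa using ((hasDerivAt_id' 0).fun_mul ((hF.const_mul _).neg.cexp).hasDerivAt).deriv

end Descent

theorem stmt_5_general (Y : ℝ) (Ψ : ℂ → ℂ)
    (hhol : DifferentiableOn ℂ Ψ {W : ℂ | W.im < -Y})
    (hcomm : ∀ W : ℂ, W.im < -Y → Ψ (W + 1) = Ψ W + 1)
    (hbdd : ∃ M : ℝ, ∀ W : ℂ, W.im < -Y → ‖Ψ W - W‖ ≤ M) :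
    ∃ c : ℂ,
      -- (1) `Ψ(W) - W → c` as `Im W → -∞`, uniformly in `Re W`
      Tendsto (fun W : ℂ => Ψ W - W) (comap Complex.im atBot) (nhds c) ∧
      -- (2) existence and uniqueness of the descended map `ψ`
      ∃ ψ : ℂ → ℂ,
        DifferentiableOn ℂ ψ (Metric.ball (0 : ℂ) (Real.exp (-(2 * Real.pi * Y)))) ∧
        ψ 0 = 0 ∧
        (∀ W : ℂ, W.im < -Y →
          ψ (Complex.exp (-(2 * Real.pi * Complex.I * W))) =
            Complex.exp (-(2 * Real.pi * Complex.I * Ψ W))) ∧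
        (∀ ψ' : ℂ → ℂ,
          DifferentiableOn ℂ ψ' (Metric.ball (0 : ℂ) (Real.exp (-(2 * Real.pi * Y)))) →
          ψ' 0 = 0 →
          (∀ W : ℂ, W.im < -Y →
            ψ' (Complex.exp (-(2 * Real.pi * Complex.I * W))) =
              Complex.exp (-(2 * Real.pi * Complex.I * Ψ W))) →
          ∀ w ∈ Metric.ball (0 : ℂ) (Real.exp (-(2 * Real.pi * Y))), ψ' w = ψ w) ∧
        -- (3) multiplier at the origin
        deriv ψ 0 = Complex.exp (-(2 * Real.pi * Complex.I * c)) :=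
  ⟨_, tendsto_sub_self_comap_im_atBot hhol hcomm hbdd, descent Y Ψ,
    differentiableOn_descent hhol hcomm hbdd, descent_zero, fun _ ↦ descent_exp hcomm,
    fun _ _ h0 hψ' ↦ eqOn_ball_of_comp_exp_eq (h0.trans descent_zero.symm)
      fun W hW ↦ (hψ' W hW).trans (descent_exp hcomm hW).symm,
    deriv_descent_zero hhol hcomm hbdd⟩

/-- Descent of a near-identity map commuting with `T₁` on a lower half-plane through
`E(W) = exp (-2πiW)`: the translation part at `-i∞` exists, and the induced germ `ψ`
at the origin is holomorphic, unique, and has multiplier `exp (-2πic)`. -/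
theorem stmt_5 (Y : ℝ) (hY : 0 < Y) (Ψ : ℂ → ℂ)
    (hhol : DifferentiableOn ℂ Ψ {W : ℂ | W.im < -Y})
    (hcomm : ∀ W : ℂ, W.im < -Y → Ψ (W + 1) = Ψ W + 1)
    (hbdd : ∃ M : ℝ, ∀ W : ℂ, W.im < -Y → ‖Ψ W - W‖ ≤ M) :
    ∃ c : ℂ,
      -- (1) `Ψ(W) - W → c` as `Im W → -∞`, uniformly in `Re W`
      Tendsto (fun W : ℂ => Ψ W - W) (comap Complex.im atBot) (nhds c) ∧
      -- (2) existence and uniqueness of the descended map `ψ`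
      ∃ ψ : ℂ → ℂ,
        DifferentiableOn ℂ ψ (Metric.ball (0 : ℂ) (Real.exp (-(2 * Real.pi * Y)))) ∧
        ψ 0 = 0 ∧
        (∀ W : ℂ, W.im < -Y →
          ψ (Complex.exp (-(2 * Real.pi * Complex.I * W))) =
            Complex.exp (-(2 * Real.pi * Complex.I * Ψ W))) ∧
        (∀ ψ' : ℂ → ℂ,
          DifferentiableOn ℂ ψ' (Metric.ball (0 : ℂ) (Real.exp (-(2 * Real.pi * Y)))) →
          ψ' 0 = 0 →
          (∀ W : ℂ, W.im < -Y →
            ψ' (Complex.exp (-(2 * Real.pi * Complex.I * W))) =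
              Complex.exp (-(2 * Real.pi * Complex.I * Ψ W))) →
          ∀ w ∈ Metric.ball (0 : ℂ) (Real.exp (-(2 * Real.pi * Y))), ψ' w = ψ w) ∧
        -- (3) multiplier at the origin
        deriv ψ 0 = Complex.exp (-(2 * Real.pi * Complex.I * c)) :=
  stmt_5_general Y Ψ hhol hcomm hbdd
end

section
/- Let Y₀ ≥ 0 and N > 0 with N e^{−2πY₀} ≤ 1/2, and let Λ be holomorphic on H = {W ∈ ℂ : Im W < −Y₀} with Λ(W+1) = Λ(W) and |Λ(W)| ≤ N e^{2π Im W} for all W ∈ H. Set Ψ := id + Λ, let α ∈ ℂ with Im α ≤ −1, and set F := Ψ ∘ T_α. Then: (a) for every n ≥ 0 the iterate F^{∘n} maps H into H and Im F^{∘n}(W) ≤ Im W + n·Im α + 1 for all W ∈ H; (b) the series G(W) := Σ_{n ≥ 0} Λ(F^{∘n}(W) + α) converges absolutely and uniformly on H and satisfies |G(W)| ≤ 2N e^{2π(Im W + Im α)} for all W ∈ H; (c) the map H_* := id + G is holomorphic on H, commutes with T₁, and satisfies H_* ∘ Ψ ∘ T_α = T_α ∘ H_* on H. -/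
/-!
Each application of `F = Ψ ∘ T_α` moves a point of the half-plane `Im W < -Y₀` down by at
least `1/2`, since `Im α ≤ -1` and `|Λ| ≤ N e^{-2πY₀} ≤ 1/2` there. Hence `e^{2π Im}` shrinks by
`e^{-π} ≤ 1/2` at each step, so `Λ(F^{∘n}(W) + α)` is dominated by `2^{-n}` times its first term:
the series `G` converges uniformly, is holomorphic, and is bounded by twice its first term.
The conjugacy is the telescoping identity `G = Λ ∘ T_α + G ∘ F`, and the periodicity of `Λ`
passes to `F`, hence to every term of `G`.
-/

open Complex
open scoped Real

lemma exp_neg_pi_le_half : Real.exp (-π) ≤ 1 / 2 := by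
  rw [Real.exp_neg, inv_le_comm₀ (Real.exp_pos π) (by norm_num)]
  linarith [Real.add_one_le_exp π, Real.pi_gt_three]

lemma exp_two_pi_mul_le_mul_half_pow {s t : ℝ} (n : ℕ) (h : s ≤ t - n / 2) :
    Real.exp (2 * π * s) ≤ Real.exp (2 * π * t) * (1 / 2) ^ n :=
  calc Real.exp (2 * π * s)
      ≤ Real.exp (2 * π * t + n * -π) := Real.exp_le_exp.mpr (by nlinarith [Real.pi_pos])
    _ = Real.exp (2 * π * t) * Real.exp (-π) ^ n := by rw [Real.exp_add, Real.exp_nat_mul]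
    _ ≤ Real.exp (2 * π * t) * (1 / 2) ^ n := by gcongr; exact exp_neg_pi_le_half

lemma mul_exp_two_pi_mul_le_half {Y₀ N t : ℝ} (hN : 0 ≤ N)
    (hNY : N * Real.exp (-(2 * π * Y₀)) ≤ 1 / 2) (ht : t ≤ -Y₀) :
    N * Real.exp (2 * π * t) ≤ 1 / 2 :=
  calc N * Real.exp (2 * π * t) ≤ N * Real.exp (-(2 * π * Y₀)) := by
        gcongr; nlinarith [Real.pi_pos]
    _ ≤ 1 / 2 := hNY

lemma iterate_im_le_sub_mul {f : ℂ → ℂ} {a δ : ℝ} (hδ : 0 ≤ δ)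
    (hf : ∀ V : ℂ, V.im < a → (f V).im ≤ V.im - δ) {W : ℂ} (hW : W.im < a) (n : ℕ) :
    (f^[n] W).im ≤ W.im - n * δ := by
  induction n with
  | zero => simp
  | succ n ih =>
    rw [Function.iterate_succ_apply']
    have hδn : 0 ≤ n * δ := by positivity
    push_cast
    linarith [hf _ (by linarith)]

lemma iterate_add_const_of_mapsTo {X : Type*} [Add X] {f : X → X} {s : Set X} {c : X}
    (hs : Set.MapsTo f s s) (hf : ∀ x ∈ s, f (x + c) = f x + c) {x : X} (hx : x ∈ s) (n : ℕ) :
    f^[n] (x + c) = f^[n] x + c := by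
  induction n with
  | zero => rfl
  | succ n ih => rw [Function.iterate_succ_apply', ih, hf _ (hs.iterate n hx),
      Function.iterate_succ_apply']

/-- The map `F = Ψ ∘ T_α`, where `Ψ = id + Λ`. -/
def returnMap (Λ : ℂ → ℂ) (α W : ℂ) : ℂ := W + α + Λ (W + α)

/-- The series `G`; the normalization is `H_* = id + G`. -/
noncomputable def telescopicSeries (Λ : ℂ → ℂ) (α W : ℂ) : ℂ :=
  ∑' n : ℕ, Λ ((returnMap Λ α)^[n] W + α)

section ReturnMap

variable {Λ : ℂ → ℂ} {α : ℂ} {Y₀ : ℝ}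

lemma returnMap_im_le (V : ℂ) : (returnMap Λ α V).im ≤ V.im + α.im + ‖Λ (V + α)‖ := by
  simp only [returnMap, add_im]
  linarith [im_le_norm (Λ (V + α))]

lemma iterate_returnMap_im_le (W : ℂ) (n : ℕ) :
    ((returnMap Λ α)^[n] W).im ≤
      W.im + n * α.im + ∑ k ∈ Finset.range n, ‖Λ ((returnMap Λ α)^[k] W + α)‖ := by
  induction n with
  | zero => simp
  | succ n ih =>
    rw [Function.iterate_succ_apply', Finset.sum_range_succ]
    push_cast
    linarith [returnMap_im_le (Λ := Λ) (α := α) ((returnMap Λ α)^[n] W)]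

lemma returnMap_im_le_sub_half (hα : α.im ≤ -1)
    (hsmall : ∀ V : ℂ, V.im < -Y₀ → ‖Λ V‖ ≤ 1 / 2) {V : ℂ} (hV : V.im < -Y₀) :
    (returnMap Λ α V).im ≤ V.im - 1 / 2 := by
  have := hsmall (V + α) (by rw [add_im]; linarith)
  linarith [returnMap_im_le (Λ := Λ) (α := α) V]

lemma iterate_returnMap_im_le_sub (hα : α.im ≤ -1)
    (hsmall : ∀ V : ℂ, V.im < -Y₀ → ‖Λ V‖ ≤ 1 / 2) {W : ℂ} (hW : W.im < -Y₀) (n : ℕ) :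
    ((returnMap Λ α)^[n] W).im ≤ W.im - n / 2 := by
  have := iterate_im_le_sub_mul (by norm_num)
    (fun V hV => returnMap_im_le_sub_half hα hsmall hV) hW n
  linarith

lemma mapsTo_returnMap (hα : α.im ≤ -1) (hsmall : ∀ V : ℂ, V.im < -Y₀ → ‖Λ V‖ ≤ 1 / 2) :
    Set.MapsTo (returnMap Λ α) {W : ℂ | W.im < -Y₀} {W : ℂ | W.im < -Y₀} :=
  fun V (hV : V.im < -Y₀) => show (returnMap Λ α V).im < -Y₀ by
    linarith [returnMap_im_le_sub_half hα hsmall hV]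

lemma norm_le_half_of_bound {N : ℝ} (hN : 0 ≤ N)
    (hNY : N * Real.exp (-(2 * π * Y₀)) ≤ 1 / 2)
    (hbound : ∀ W : ℂ, W.im < -Y₀ → ‖Λ W‖ ≤ N * Real.exp (2 * π * W.im))
    {V : ℂ} (hV : V.im < -Y₀) : ‖Λ V‖ ≤ 1 / 2 :=
  (hbound V hV).trans (mul_exp_two_pi_mul_le_half hN hNY hV.le)

lemma norm_apply_iterate_returnMap_add_le {N : ℝ} (hN : 0 ≤ N)
    (hNY : N * Real.exp (-(2 * π * Y₀)) ≤ 1 / 2)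
    (hbound : ∀ W : ℂ, W.im < -Y₀ → ‖Λ W‖ ≤ N * Real.exp (2 * π * W.im)) (hα : α.im ≤ -1)
    {W : ℂ} (hW : W.im < -Y₀) (n : ℕ) :
    ‖Λ ((returnMap Λ α)^[n] W + α)‖ ≤ N * Real.exp (2 * π * (W.im + α.im)) * (1 / 2) ^ n := by
  have hn := iterate_returnMap_im_le_sub hα (fun V => norm_le_half_of_bound hN hNY hbound) hW n
  have hn' : (0 : ℝ) ≤ n / 2 := by positivity
  calc ‖Λ ((returnMap Λ α)^[n] W + α)‖
      ≤ N * Real.exp (2 * π * ((returnMap Λ α)^[n] W + α).im) :=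
        hbound _ (by rw [add_im]; linarith)
    _ ≤ N * (Real.exp (2 * π * (W.im + α.im)) * (1 / 2) ^ n) := by
        gcongr; exact exp_two_pi_mul_le_mul_half_pow n (by rw [add_im]; linarith)
    _ = N * Real.exp (2 * π * (W.im + α.im)) * (1 / 2) ^ n := by ring

lemma iterate_returnMap_im_le_add_one {N : ℝ} (hN : 0 ≤ N)
    (hNY : N * Real.exp (-(2 * π * Y₀)) ≤ 1 / 2)
    (hbound : ∀ W : ℂ, W.im < -Y₀ → ‖Λ W‖ ≤ N * Real.exp (2 * π * W.im)) (hα : α.im ≤ -1)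
    {W : ℂ} (hW : W.im < -Y₀) (n : ℕ) :
    ((returnMap Λ α)^[n] W).im ≤ W.im + n * α.im + 1 := by
  have hc := mul_exp_two_pi_mul_le_half (t := W.im + α.im) hN hNY (by linarith)
  have hgeom := mul_le_mul hc (sum_geometric_two_le n) (by positivity) (by norm_num)
  calc ((returnMap Λ α)^[n] W).im
      ≤ W.im + n * α.im + ∑ k ∈ Finset.range n, ‖Λ ((returnMap Λ α)^[k] W + α)‖ :=
        iterate_returnMap_im_le W n
    _ ≤ W.im + n * α.im +
          N * Real.exp (2 * π * (W.im + α.im)) * ∑ k ∈ Finset.range n, (1 / 2 : ℝ) ^ k := by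
        rw [Finset.mul_sum]
        gcongr with k
        exact norm_apply_iterate_returnMap_add_le hN hNY hbound hα hW k
    _ ≤ W.im + n * α.im + 1 := by linarith

lemma mapsTo_add_const_of_im_nonpos (hα : α.im ≤ 0) :
    Set.MapsTo (· + α) {W : ℂ | W.im < -Y₀} {W : ℂ | W.im < -Y₀} :=
  fun V (hV : V.im < -Y₀) => show (V + α).im < -Y₀ by rw [add_im]; linarith

lemma differentiableOn_returnMap (hα : α.im ≤ 0)
    (hhol : DifferentiableOn ℂ Λ {W : ℂ | W.im < -Y₀}) :
    DifferentiableOn ℂ (returnMap Λ α) {W : ℂ | W.im < -Y₀} :=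
  (differentiableOn_id.add_const α).add
    (hhol.comp (differentiableOn_id.add_const α) (mapsTo_add_const_of_im_nonpos hα))

lemma differentiableOn_telescopicSeries {u : ℕ → ℝ} (hu : Summable u) (hα : α.im ≤ 0)
    (hhol : DifferentiableOn ℂ Λ {W : ℂ | W.im < -Y₀})
    (hmaps : Set.MapsTo (returnMap Λ α) {W : ℂ | W.im < -Y₀} {W : ℂ | W.im < -Y₀})
    (hu_le : ∀ (n : ℕ) (W : ℂ), W.im < -Y₀ → ‖Λ ((returnMap Λ α)^[n] W + α)‖ ≤ u n) :
    DifferentiableOn ℂ (telescopicSeries Λ α) {W : ℂ | W.im < -Y₀} :=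
  differentiableOn_tsum_of_summable_norm hu
    (fun n => hhol.comp (((differentiableOn_returnMap hα hhol).iterate hmaps n).add_const α)
      ((mapsTo_add_const_of_im_nonpos hα).comp (hmaps.iterate n)))
    (isOpen_lt continuous_im continuous_const) hu_le

lemma returnMap_add_one (hα : α.im ≤ 0) (hper : ∀ W : ℂ, W.im < -Y₀ → Λ (W + 1) = Λ W)
    {V : ℂ} (hV : V.im < -Y₀) : returnMap Λ α (V + 1) = returnMap Λ α V + 1 := by
  have hVα : (V + α).im < -Y₀ := by rw [add_im]; linarith
  simp only [returnMap, add_right_comm V 1 α, hper _ hVα]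
  ring

lemma telescopicSeries_add_one (hα : α.im ≤ 0) (hper : ∀ W : ℂ, W.im < -Y₀ → Λ (W + 1) = Λ W)
    (hmaps : Set.MapsTo (returnMap Λ α) {W : ℂ | W.im < -Y₀} {W : ℂ | W.im < -Y₀})
    {W : ℂ} (hW : W.im < -Y₀) : telescopicSeries Λ α (W + 1) = telescopicSeries Λ α W := by
  refine tsum_congr fun n => ?_
  have hn : ((returnMap Λ α)^[n] W).im < -Y₀ := hmaps.iterate n hW
  rw [iterate_add_const_of_mapsTo hmaps (fun V hV => returnMap_add_one hα hper hV) hW,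
    add_right_comm, hper _ (by rw [add_im]; linarith)]

lemma telescopicSeries_eq_add_returnMap {W : ℂ}
    (hs : Summable fun n : ℕ => Λ ((returnMap Λ α)^[n] W + α)) :
    telescopicSeries Λ α W = Λ (W + α) + telescopicSeries Λ α (returnMap Λ α W) := by
  rw [telescopicSeries, hs.tsum_eq_zero_add]
  rfl

end ReturnMap

theorem stmt_6_general (Y₀ N : ℝ) (hN : 0 < N)
    (hNY : N * Real.exp (-(2 * Real.pi * Y₀)) ≤ 1 / 2)
    (Λ : ℂ → ℂ)
    (hhol : DifferentiableOn ℂ Λ {W : ℂ | W.im < -Y₀})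
    (hper : ∀ W : ℂ, W.im < -Y₀ → Λ (W + 1) = Λ W)
    (hbound : ∀ W : ℂ, W.im < -Y₀ → ‖Λ W‖ ≤ N * Real.exp (2 * Real.pi * W.im))
    (α : ℂ) (hα : α.im ≤ -1)
    (F : ℂ → ℂ) (hF : ∀ W : ℂ, F W = (W + α) + Λ (W + α))
    (G : ℂ → ℂ) (hG : ∀ W : ℂ, G W = ∑' n : ℕ, Λ (F^[n] W + α)) :
    -- (a) the iterates of `F` stay in the half-plane and descend linearly
    (∀ (n : ℕ) (W : ℂ), W.im < -Y₀ →
        (F^[n] W).im < -Y₀ ∧ (F^[n] W).im ≤ W.im + n * α.im + 1) ∧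
    -- (b) absolute and uniform convergence of the series defining `G`, and its bound
    (∀ W : ℂ, W.im < -Y₀ → Summable fun n : ℕ => ‖Λ (F^[n] W + α)‖) ∧
    (∃ u : ℕ → ℝ, Summable u ∧
        ∀ (n : ℕ) (W : ℂ), W.im < -Y₀ → ‖Λ (F^[n] W + α)‖ ≤ u n) ∧
    (∀ W : ℂ, W.im < -Y₀ →
        ‖G W‖ ≤ 2 * N * Real.exp (2 * Real.pi * (W.im + α.im))) ∧
    -- (c) `H_* = id + G` is holomorphic, commutes with `T₁`, and conjugates
    -- `Ψ ∘ T_α` to `T_α`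
    DifferentiableOn ℂ (fun W => W + G W) {W : ℂ | W.im < -Y₀} ∧
    (∀ W : ℂ, W.im < -Y₀ → (W + 1) + G (W + 1) = (W + G W) + 1) ∧
    (∀ W : ℂ, W.im < -Y₀ → F W + G (F W) = (W + G W) + α) := by
  obtain rfl : F = returnMap Λ α := funext hF
  obtain rfl : G = telescopicSeries Λ α := funext hG
  have hmaps := mapsTo_returnMap hα fun V => norm_le_half_of_bound hN.le hNY hbound
  have hdecay {W : ℂ} (hW : W.im < -Y₀) :=
    norm_apply_iterate_returnMap_add_le hN.le hNY hbound hα hW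
  have hsum (W : ℂ) (hW : W.im < -Y₀) : Summable fun n => ‖Λ ((returnMap Λ α)^[n] W + α)‖ :=
    (summable_geometric_two.mul_left _).of_nonneg_of_le (fun _ => norm_nonneg _) (hdecay hW)
  have hunif (n : ℕ) (W : ℂ) (hW : W.im < -Y₀) :
      ‖Λ ((returnMap Λ α)^[n] W + α)‖ ≤ N * Real.exp (2 * π * (-Y₀ + α.im)) * (1 / 2) ^ n :=
    (hdecay hW n).trans (by gcongr)
  have hu := summable_geometric_two.mul_left (N * Real.exp (2 * π * (-Y₀ + α.im)))
  refine ⟨fun n W hW => ⟨hmaps.iterate n hW,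
      iterate_returnMap_im_le_add_one hN.le hNY hbound hα hW n⟩,
    hsum, ⟨_, hu, hunif⟩,
    fun W hW => (tsum_of_norm_bounded (hasSum_geometric_two.mul_left _) (hdecay hW)).trans_eq
      (by ring),
    differentiableOn_id.add (differentiableOn_telescopicSeries hu (by linarith) hhol hmaps hunif),
    fun W hW => by rw [telescopicSeries_add_one (by linarith) hper hmaps hW]; ring,
    fun W hW => by rw [telescopicSeries_eq_add_returnMap (hsum W hW).of_norm, returnMap]; ring⟩

/-- Telescopic-series construction of the Fatou–Glutsyuk normalization `H_* = id + G`
conjugating the return map `Ψ ∘ T_α` (with `Ψ = id + Λ`, `F = Ψ ∘ T_α`) to the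
translation `T_α`, together with the exponential estimates on `G`. -/
theorem stmt_6 (Y₀ N : ℝ) (hY₀ : 0 ≤ Y₀) (hN : 0 < N)
    (hNY : N * Real.exp (-(2 * Real.pi * Y₀)) ≤ 1 / 2)
    (Λ : ℂ → ℂ)
    (hhol : DifferentiableOn ℂ Λ {W : ℂ | W.im < -Y₀})
    (hper : ∀ W : ℂ, W.im < -Y₀ → Λ (W + 1) = Λ W)
    (hbound : ∀ W : ℂ, W.im < -Y₀ → ‖Λ W‖ ≤ N * Real.exp (2 * Real.pi * W.im))
    (α : ℂ) (hα : α.im ≤ -1)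
    (F : ℂ → ℂ) (hF : ∀ W : ℂ, F W = (W + α) + Λ (W + α))
    (G : ℂ → ℂ) (hG : ∀ W : ℂ, G W = ∑' n : ℕ, Λ (F^[n] W + α)) :
    -- (a) the iterates of `F` stay in the half-plane and descend linearly
    (∀ (n : ℕ) (W : ℂ), W.im < -Y₀ →
        (F^[n] W).im < -Y₀ ∧ (F^[n] W).im ≤ W.im + n * α.im + 1) ∧
    -- (b) absolute and uniform convergence of the series defining `G`, and its bound
    (∀ W : ℂ, W.im < -Y₀ → Summable fun n : ℕ => ‖Λ (F^[n] W + α)‖) ∧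
    (∃ u : ℕ → ℝ, Summable u ∧
        ∀ (n : ℕ) (W : ℂ), W.im < -Y₀ → ‖Λ (F^[n] W + α)‖ ≤ u n) ∧
    (∀ W : ℂ, W.im < -Y₀ →
        ‖G W‖ ≤ 2 * N * Real.exp (2 * Real.pi * (W.im + α.im))) ∧
    -- (c) `H_* = id + G` is holomorphic, commutes with `T₁`, and conjugates
    -- `Ψ ∘ T_α` to `T_α`
    DifferentiableOn ℂ (fun W => W + G W) {W : ℂ | W.im < -Y₀} ∧
    (∀ W : ℂ, W.im < -Y₀ → (W + 1) + G (W + 1) = (W + G W) + 1) ∧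
    (∀ W : ℂ, W.im < -Y₀ → F W + G (F W) = (W + G W) + α) :=
  stmt_6_general Y₀ N hN hNY Λ hhol hper hbound α hα F hF G hG
end

section
/- Let Y₀ ≥ 0 and N > 0 with N e^{−2πY₀} ≤ 1/2, let Λ be holomorphic on {W ∈ ℂ : Im W < −Y₀} with Λ(W+1) = Λ(W) and |Λ(W)| ≤ N e^{2π Im W}, set Ψ := id + Λ, and let α ∈ ℂ with Im α ≥ 1. Suppose H₁ and H₂ are holomorphic on {Im W < −Y₀}, commute with T₁, have H_i − id bounded, and satisfy the conjugacy equation H_i ∘ T_α ∘ Ψ = T_α ∘ H_i for all W with Im W < −Y₀ − 3 − Im α (i = 1, 2). Let c_i := lim_{Im W → −∞}(H_i(W) − W) (these limits exist). Then H₂ = T_{c₂ − c₁} ∘ H₁ on {Im W < −Y₀}; in particular the normalization H_i is unique up to left composition with a translation, and unique if one requires c_i = 0. -/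
/-!
The difference `H₂ - H₁` is invariant under `T_α ∘ Ψ` deep in the half-plane. There `Λ` is
small, so by Cauchy's estimate it is a contraction and `T_α ∘ Ψ` is onto, every point having a
preimage at least `1 / 2` lower. Along such backward orbits `Im W → -∞`, so `H₂ - H₁` equals the
limit `c₂ - c₁` on a lower half-plane, and by the identity theorem on the whole domain.
-/

open Filter Complex Set Metric
open scoped NNReal Topology

namespace Complex

variable {E : Type*} [NormedAddCommGroup E] [NormedSpace ℂ E]

theorem closedBall_subset_im_lt {x : ℂ} {a : ℝ} (hx : x.im < a - 1) :
    closedBall x 1 ⊆ {z : ℂ | z.im < a} := fun z hz => by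
  have hzx : |z.im - x.im| ≤ 1 := by
    simpa only [sub_im] using (abs_im_le_norm (z - x)).trans (mem_closedBall_iff_norm.1 hz)
  simp only [mem_ofPred_eq]
  linarith [(abs_le.1 hzx).2]

theorem lipschitzOnWith_of_norm_le {f : ℂ → E} {a : ℝ} {C : ℝ≥0}
    (hf : DifferentiableOn ℂ f {z : ℂ | z.im < a}) (hC : ∀ z : ℂ, z.im < a → ‖f z‖ ≤ C) :
    LipschitzOnWith C f {z : ℂ | z.im < a - 1} := by
  have hopen : IsOpen {z : ℂ | z.im < a} := isOpen_lt continuous_im continuous_const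
  refine (convex_halfSpace_im_lt _).lipschitzOnWith_of_nnnorm_deriv_le
    (fun x hx => hf.differentiableAt <| hopen.mem_nhds <| by
      simp only [mem_ofPred_eq] at hx ⊢; linarith) (fun x hx => ?_)
  have hball := closedBall_subset_im_lt hx
  have hd : DiffContOnCl ℂ f (ball x 1) :=
    (hf.mono ((closure_ball x one_ne_zero).trans_subset hball)).diffContOnCl
  rw [← NNReal.coe_le_coe, coe_nnnorm, ← div_one (C : ℝ)]
  exact norm_deriv_le_of_forall_mem_sphere_norm_le one_pos hd
    fun z hz => hC z (hball (sphere_subset_closedBall hz))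

theorem exists_add_eq_of_lipschitzOnWith {g : ℂ → ℂ} {K : ℝ≥0} (hK : K < 1) {b r : ℝ}
    (hg : LipschitzOnWith K g {z : ℂ | z.im < b}) (hr : ∀ z : ℂ, z.im < b → ‖g z‖ ≤ r)
    {V : ℂ} (hV : V.im + r < b) : ∃ W : ℂ, W.im ≤ V.im + r ∧ W + g W = V := by
  set s := {z : ℂ | z.im ≤ V.im + r}
  have hsb : s ⊆ {z : ℂ | z.im < b} := fun z hz => lt_of_le_of_lt hz hV
  have hmaps : MapsTo (fun z => V - g z) s s := fun z hz => by
    have := (abs_im_le_norm (g z)).trans (hr z (hsb hz))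
    simp only [s, mem_ofPred_eq, sub_im]
    linarith [(abs_le.1 this).1]
  have hcontr : ContractingWith K (hmaps.restrict _ s s) := by
    refine ⟨hK, hmaps.lipschitzOnWith_iff_restrict.1 ?_⟩
    refine lipschitzOnWith_iff_norm_sub_le.2 fun x hx y hy => ?_
    rw [sub_sub_sub_cancel_left, norm_sub_rev]
    exact lipschitzOnWith_iff_norm_sub_le.1 hg (hsb hx) (hsb hy)
  have hr0 : 0 ≤ r := (norm_nonneg _).trans (hr ((b - 1 : ℝ) * I) (by simp))
  obtain ⟨W, hWs, hWfix, -⟩ := hcontr.exists_fixedPoint'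
    (isClosed_le continuous_im continuous_const).isComplete hmaps
    (show V ∈ s by simp [s, hr0]) (edist_ne_top _ _)
  have hfix : V - g W = W := hWfix
  exact ⟨W, hWs, by linear_combination -hfix⟩

theorem eq_of_tendsto_of_forall_exists_im_le {X : Type*} [TopologicalSpace X] [T2Space X]
    {D : ℂ → X} {c : X} {b δ : ℝ} (hδ : 0 < δ) (hD : Tendsto D (comap im atBot) (𝓝 c))
    (hstep : ∀ V : ℂ, V.im ≤ b → ∃ W : ℂ, W.im ≤ V.im - δ ∧ D W = D V)
    {V : ℂ} (hV : V.im ≤ b) : D V = c := by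
  have horbit : ∀ n : ℕ, ∃ W : ℂ, W.im ≤ V.im - n * δ ∧ D W = D V := by
    intro n
    induction n with
    | zero => exact ⟨V, by simp, rfl⟩
    | succ n ih =>
      obtain ⟨W, hW, hDW⟩ := ih
      obtain ⟨W', hW', hDW'⟩ := hstep W (by nlinarith [n.cast_nonneg (α := ℝ)])
      exact ⟨W', by push_cast; linarith, hDW'.trans hDW⟩
  choose W hW hDW using horbit
  have hWim : Tendsto (fun n => (W n).im) atTop atBot :=
    tendsto_atBot_mono hW <| tendsto_atBot_add_const_left _ _ <|
      tendsto_neg_atTop_atBot.comp (tendsto_natCast_atTop_atTop.atTop_mul_const hδ) |>.congr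
        fun n => by simp
  have := hD.comp (tendsto_comap_iff.2 hWim)
  simp only [Function.comp_def, hDW] at this
  exact tendsto_nhds_unique tendsto_const_nhds this

theorem eqOn_of_eqOn_im_le [CompleteSpace E] {f g : ℂ → E} {a b : ℝ}
    (hf : DifferentiableOn ℂ f {z : ℂ | z.im < a}) (hg : DifferentiableOn ℂ g {z : ℂ | z.im < a})
    (hfg : EqOn f g {z : ℂ | z.im ≤ b}) : EqOn f g {z : ℂ | z.im < a} := by
  have hopen (t : ℝ) : IsOpen {z : ℂ | z.im < t} := isOpen_lt continuous_im continuous_const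
  set z₀ : ℂ := ((min a b - 1 : ℝ) : ℂ) * I
  have hz₀ : z₀.im < min a b := by
    have : z₀.im = min a b - 1 := by simp [z₀]
    linarith
  refine (hf.analyticOnNhd (hopen a)).eqOn_of_preconnected_of_eventuallyEq
    (hg.analyticOnNhd (hopen a)) (convex_halfSpace_im_lt a).isPreconnected
    (lt_of_lt_of_le hz₀ (min_le_left a b)) ?_
  filter_upwards [(hopen _).mem_nhds hz₀] with z hz
  exact hfg (le_of_lt (lt_of_lt_of_le hz (min_le_right a b)))

end Complex

theorem stmt_8_general (Y₀ N : ℝ) (hN : 0 < N)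
    (hNY : N * Real.exp (-(2 * Real.pi * Y₀)) ≤ 1 / 2)
    (Λ : ℂ → ℂ)
    (hhol : DifferentiableOn ℂ Λ {W : ℂ | W.im < -Y₀})
    (hbound : ∀ W : ℂ, W.im < -Y₀ → ‖Λ W‖ ≤ N * Real.exp (2 * Real.pi * W.im))
    (α : ℂ) (hα : 1 ≤ α.im)
    (H₁ H₂ : ℂ → ℂ) (c₁ c₂ : ℂ)
    (hhol₁ : DifferentiableOn ℂ H₁ {W : ℂ | W.im < -Y₀})
    (hhol₂ : DifferentiableOn ℂ H₂ {W : ℂ | W.im < -Y₀})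
    (hconj₁ : ∀ W : ℂ, W.im < -Y₀ - 3 - α.im → H₁ ((W + Λ W) + α) = H₁ W + α)
    (hconj₂ : ∀ W : ℂ, W.im < -Y₀ - 3 - α.im → H₂ ((W + Λ W) + α) = H₂ W + α)
    (hc₁ : Tendsto (fun W : ℂ => H₁ W - W) (comap Complex.im atBot) (nhds c₁))
    (hc₂ : Tendsto (fun W : ℂ => H₂ W - W) (comap Complex.im atBot) (nhds c₂)) :
    (∀ W : ℂ, W.im < -Y₀ → H₂ W = H₁ W + (c₂ - c₁)) ∧
    (c₁ = c₂ → ∀ W : ℂ, W.im < -Y₀ → H₂ W = H₁ W) := by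
  have hΛ : ∀ W : ℂ, W.im < -Y₀ → ‖Λ W‖ ≤ ((1 / 2 : ℝ≥0) : ℝ) := fun W hW => by
    refine (hbound W hW).trans <| le_trans ?_ (by simpa using hNY)
    gcongr
    nlinarith [Real.pi_pos]
  have hlip := lipschitzOnWith_of_norm_le hhol hΛ
  have hstep : ∀ V : ℂ, V.im ≤ -Y₀ - 4 →
      ∃ W : ℂ, W.im ≤ V.im - 1 / 2 ∧ H₂ W - H₁ W = H₂ V - H₁ V := fun V hV => by
    obtain ⟨W, hW, hWV⟩ := exists_add_eq_of_lipschitzOnWith (by norm_num) hlip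
      (fun z hz => hΛ z (by linarith)) (V := V - α) (by norm_num; linarith)
    norm_num at hW
    have hWdeep : W.im < -Y₀ - 3 - α.im := by linarith
    refine ⟨W, by linarith, ?_⟩
    have hVW : V = W + Λ W + α := by rw [hWV]; ring
    rw [hVW, hconj₁ W hWdeep, hconj₂ W hWdeep]
    ring
  have hconst : ∀ V : ℂ, V.im ≤ -Y₀ - 4 → H₂ V - H₁ V = c₂ - c₁ := fun V hV =>
    eq_of_tendsto_of_forall_exists_im_le (by norm_num)
      (by simpa using hc₂.sub hc₁) hstep hV
  have hEq := eqOn_of_eqOn_im_le hhol₂ (hhol₁.add_const (c₂ - c₁))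
    (fun V hV => by linear_combination hconst V hV)
  exact ⟨hEq, fun hc W hW => by simpa [hc] using hEq hW⟩

/-- Uniqueness up to left composition with a translation of the Fatou–Glutsyuk
normalizations: two solutions of `H ∘ T_α ∘ Ψ = T_α ∘ H` (with `Ψ = id + Λ`) that
commute with `T₁` and are bounded perturbations of the identity differ by the
translation `T_{c₂ - c₁}` of their asymptotic constants. -/
theorem stmt_8 (Y₀ N : ℝ) (hY₀ : 0 ≤ Y₀) (hN : 0 < N)
    (hNY : N * Real.exp (-(2 * Real.pi * Y₀)) ≤ 1 / 2)
    (Λ : ℂ → ℂ)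
    (hhol : DifferentiableOn ℂ Λ {W : ℂ | W.im < -Y₀})
    (hper : ∀ W : ℂ, W.im < -Y₀ → Λ (W + 1) = Λ W)
    (hbound : ∀ W : ℂ, W.im < -Y₀ → ‖Λ W‖ ≤ N * Real.exp (2 * Real.pi * W.im))
    (α : ℂ) (hα : 1 ≤ α.im)
    (H₁ H₂ : ℂ → ℂ) (c₁ c₂ : ℂ)
    (hhol₁ : DifferentiableOn ℂ H₁ {W : ℂ | W.im < -Y₀})
    (hhol₂ : DifferentiableOn ℂ H₂ {W : ℂ | W.im < -Y₀})
    (hcomm₁ : ∀ W : ℂ, W.im < -Y₀ → H₁ (W + 1) = H₁ W + 1)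
    (hcomm₂ : ∀ W : ℂ, W.im < -Y₀ → H₂ (W + 1) = H₂ W + 1)
    (hbdd₁ : ∃ M : ℝ, ∀ W : ℂ, W.im < -Y₀ → ‖H₁ W - W‖ ≤ M)
    (hbdd₂ : ∃ M : ℝ, ∀ W : ℂ, W.im < -Y₀ → ‖H₂ W - W‖ ≤ M)
    (hconj₁ : ∀ W : ℂ, W.im < -Y₀ - 3 - α.im → H₁ ((W + Λ W) + α) = H₁ W + α)
    (hconj₂ : ∀ W : ℂ, W.im < -Y₀ - 3 - α.im → H₂ ((W + Λ W) + α) = H₂ W + α)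
    (hc₁ : Tendsto (fun W : ℂ => H₁ W - W) (comap Complex.im atBot) (nhds c₁))
    (hc₂ : Tendsto (fun W : ℂ => H₂ W - W) (comap Complex.im atBot) (nhds c₂)) :
    (∀ W : ℂ, W.im < -Y₀ → H₂ W = H₁ W + (c₂ - c₁)) ∧
    (c₁ = c₂ → ∀ W : ℂ, W.im < -Y₀ → H₂ W = H₁ W) :=
  stmt_8_general Y₀ N hN hNY Λ hhol hbound α hα H₁ H₂ c₁ c₂ hhol₁ hhol₂ hconj₁ hconj₂ hc₁ hc₂
end

section
/- Let a ∈ ℂ, Y₀ ≥ 1, N > 0 with N e^{−2πY₀} ≤ 1/2, and δ ∈ (0,1]. Let Ψ̄ and Ψ̃ be holomorphic on {W : Im W > Y₀}, commuting with T₁, with |Ψ̄(W) − W + 2πia| ≤ N e^{−2π Im W} and |Ψ̃(W) − W + 2πia| ≤ N e^{−2π Im W} there. Suppose there are holomorphic maps P̃ and P̄ on {W : Im W > Y₀ + 1} and a constant D′ ∈ ℂ such that, for all W with Im W > Y₀ + 1 + 2π|a|: |P̃(W) − Ψ̃(W) − 2πia| ≤ δ, |P̄(W) − Ψ̄(W +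 2πia)| ≤ δ, |D′ + 2πia| ≤ δ, and P̃(W) = P̄(W + D′) + 2πia. Then |Ψ̄(W) − Ψ̃(W)| ≤ 4δ for all W with Im W > Y₀ + 2 + 4π|a|. -/
open Complex

/-!
Write `c = 2πia` and `ε = D' + c = O(δ)`. The flat part `φ(W) = Ψ̄(W) - W + c` of `Ψ̄` is bounded
by `N e^{-2πY₀} ≤ 1/2` on `Im W > Y₀`, so by the Cauchy estimate on discs of radius `1/2` it is
`1`-Lipschitz on `Im W > Y₀ + 1/2`. Inserting the compatibility condition,
`Ψ̄(W) - Ψ̃(W) = (φ(W) - φ(W + ε)) - ε + (P̃(W) - Ψ̃(W) - c) - (P̄(W + D') - Ψ̄(W + ε))`,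
and each of the four terms is at most `δ`.
-/

section HalfPlane

variable {F : Type*} [NormedAddCommGroup F] [NormedSpace ℂ F]

theorem closedBall_subset_setOf_lt_im {Y r : ℝ} {x : ℂ} (hx : Y + r < x.im) :
    Metric.closedBall x r ⊆ {z : ℂ | Y < z.im} := by
  intro z hz
  have hdist : |z.im - x.im| ≤ r := by
    simpa using (abs_im_le_norm (z - x)).trans (mem_closedBall_iff_norm.mp hz)
  show Y < z.im
  linarith [(abs_le.mp hdist).1]

variable {f : ℂ → F} {Y M r : ℝ}

theorem norm_deriv_le_of_norm_le_on_setOf_lt_im (hf : DifferentiableOn ℂ f {z : ℂ | Y < z.im})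
    (hM : ∀ z : ℂ, Y < z.im → ‖f z‖ ≤ M) (hr : 0 < r) {x : ℂ} (hx : Y + r < x.im) :
    ‖deriv f x‖ ≤ M / r := by
  have hball := closedBall_subset_setOf_lt_im hx
  refine norm_deriv_le_of_forall_mem_sphere_norm_le hr ?_ fun z hz =>
    hM z (hball (Metric.sphere_subset_closedBall hz))
  exact (hf.mono (closure_ball x hr.ne' ▸ hball)).diffContOnCl

theorem norm_sub_le_of_norm_le_on_setOf_lt_im (hf : DifferentiableOn ℂ f {z : ℂ | Y < z.im})
    (hM : ∀ z : ℂ, Y < z.im → ‖f z‖ ≤ M) (hr : 0 < r) {z w : ℂ}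
    (hz : Y + r < z.im) (hw : Y + r < w.im) :
    ‖f w - f z‖ ≤ M / r * ‖w - z‖ := by
  have hopen : IsOpen {z : ℂ | Y < z.im} := isOpen_lt continuous_const continuous_im
  refine (convex_halfSpace_im_gt (Y + r)).norm_image_sub_le_of_norm_deriv_le
    (fun x hx => hf.differentiableAt (hopen.mem_nhds ?_))
    (fun x hx => norm_deriv_le_of_norm_le_on_setOf_lt_im hf hM hr hx) hz hw
  change Y + r < x.im at hx
  exact lt_of_le_of_lt (le_add_of_nonneg_right hr.le) hx

end HalfPlane

theorem stmt_9_general (a : ℂ) (Y₀ N δ : ℝ) (hN : 0 < N)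
    (hNY : N * Real.exp (-(2 * Real.pi * Y₀)) ≤ 1 / 2)
    (hδ1 : δ ≤ 1)
    (Ψb Ψt : ℂ → ℂ)
    (hholb : DifferentiableOn ℂ Ψb {W : ℂ | Y₀ < W.im})
    (hboundb : ∀ W : ℂ, Y₀ < W.im →
      ‖Ψb W - W + 2 * Real.pi * Complex.I * a‖ ≤ N * Real.exp (-(2 * Real.pi * W.im)))
    (Pt Pb : ℂ → ℂ) (D' : ℂ)
    (hPt : ∀ W : ℂ, Y₀ + 1 + 2 * Real.pi * ‖a‖ < W.im →
      ‖Pt W - Ψt W - 2 * Real.pi * Complex.I * a‖ ≤ δ)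
    (hPb : ∀ W : ℂ, Y₀ + 1 + 2 * Real.pi * ‖a‖ < W.im →
      ‖Pb W - Ψb (W + 2 * Real.pi * Complex.I * a)‖ ≤ δ)
    (hD : ‖D' + 2 * Real.pi * Complex.I * a‖ ≤ δ)
    (hcomp : ∀ W : ℂ, Y₀ + 1 + 2 * Real.pi * ‖a‖ < W.im →
      Pt W = Pb (W + D') + 2 * Real.pi * Complex.I * a) :
    ∀ W : ℂ, Y₀ + 2 + 4 * Real.pi * ‖a‖ < W.im →
      ‖Ψb W - Ψt W‖ ≤ 4 * δ := by
  intro W hW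
  set c : ℂ := 2 * Real.pi * Complex.I * a
  set ε : ℂ := D' + c
  have hεim := abs_le.mp ((abs_im_le_norm ε).trans (hD.trans hδ1))
  have hare := abs_le.mp (abs_re_le_norm a)
  have hπ := Real.pi_pos
  have hWD' : (W + D').im = W.im + ε.im - 2 * Real.pi * a.re := by simp [ε, c]; ring
  have hW₁ : Y₀ + 1 + 2 * Real.pi * ‖a‖ < W.im := by nlinarith
  have hWD'₁ : Y₀ + 1 + 2 * Real.pi * ‖a‖ < (W + D').im := by rw [hWD']; nlinarith
  have hflat : ∀ z : ℂ, Y₀ < z.im → ‖Ψb z - z + c‖ ≤ 1 / 2 := fun z hz =>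
    (hboundb z hz).trans (le_trans (by gcongr) hNY)
  have hlip : ‖(Ψb (W + ε) - (W + ε) + c) - (Ψb W - W + c)‖ ≤ ‖ε‖ := by
    have := norm_sub_le_of_norm_le_on_setOf_lt_im ((hholb.sub differentiableOn_id).add_const c)
      hflat one_half_pos (z := W) (w := W + ε) (by nlinarith) (by simp only [add_im]; nlinarith)
    rwa [div_self one_half_pos.ne', one_mul, add_sub_cancel_left] at this
  have hPb' : ‖Pb (W + D') - Ψb (W + ε)‖ ≤ δ := by
    simpa only [ε, add_assoc] using hPb _ hWD'₁
  calc ‖Ψb W - Ψt W‖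
      = ‖-((Ψb (W + ε) - (W + ε) + c) - (Ψb W - W + c)) + -ε + (Pt W - Ψt W - c)
          + -(Pb (W + D') - Ψb (W + ε))‖ := by
        congr 1; linear_combination -(hcomp W hW₁)
    _ ≤ 4 * δ := by
      refine norm_add₄_le.trans ?_
      simp only [norm_neg]
      linarith [hPt W hW₁]

/-- Key step of the flatness theorem: if the two representatives `P̃` and `P̄` of the
common Glutsyuk modulus are `δ`-close to `Ψ̃ + 2πia` and `Ψ̄ ∘ T_{2πia}` respectively,
and satisfy the compatibility condition `P̃ = T_{2πia} ∘ P̄ ∘ T_{D'}` with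
`D' = -2πia + O(δ)`, then the two presentations `Ψ̄`, `Ψ̃` of the modulus are
`4δ`-close. -/
theorem stmt_9 (a : ℂ) (Y₀ N δ : ℝ) (hY₀ : 1 ≤ Y₀) (hN : 0 < N)
    (hNY : N * Real.exp (-(2 * Real.pi * Y₀)) ≤ 1 / 2)
    (hδ : 0 < δ) (hδ1 : δ ≤ 1)
    (Ψb Ψt : ℂ → ℂ)
    (hholb : DifferentiableOn ℂ Ψb {W : ℂ | Y₀ < W.im})
    (hholt : DifferentiableOn ℂ Ψt {W : ℂ | Y₀ < W.im})
    (hcommb : ∀ W : ℂ, Y₀ < W.im → Ψb (W + 1) = Ψb W + 1)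
    (hcommt : ∀ W : ℂ, Y₀ < W.im → Ψt (W + 1) = Ψt W + 1)
    (hboundb : ∀ W : ℂ, Y₀ < W.im →
      ‖Ψb W - W + 2 * Real.pi * Complex.I * a‖ ≤ N * Real.exp (-(2 * Real.pi * W.im)))
    (hboundt : ∀ W : ℂ, Y₀ < W.im →
      ‖Ψt W - W + 2 * Real.pi * Complex.I * a‖ ≤ N * Real.exp (-(2 * Real.pi * W.im)))
    (Pt Pb : ℂ → ℂ) (D' : ℂ)
    (hholPt : DifferentiableOn ℂ Pt {W : ℂ | Y₀ + 1 < W.im})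
    (hholPb : DifferentiableOn ℂ Pb {W : ℂ | Y₀ + 1 < W.im})
    (hPt : ∀ W : ℂ, Y₀ + 1 + 2 * Real.pi * ‖a‖ < W.im →
      ‖Pt W - Ψt W - 2 * Real.pi * Complex.I * a‖ ≤ δ)
    (hPb : ∀ W : ℂ, Y₀ + 1 + 2 * Real.pi * ‖a‖ < W.im →
      ‖Pb W - Ψb (W + 2 * Real.pi * Complex.I * a)‖ ≤ δ)
    (hD : ‖D' + 2 * Real.pi * Complex.I * a‖ ≤ δ)
    (hcomp : ∀ W : ℂ, Y₀ + 1 + 2 * Real.pi * ‖a‖ < W.im →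
      Pt W = Pb (W + D') + 2 * Real.pi * Complex.I * a) :
    ∀ W : ℂ, Y₀ + 2 + 4 * Real.pi * ‖a‖ < W.im →
      ‖Ψb W - Ψt W‖ ≤ 4 * δ :=
  stmt_9_general a Y₀ N δ hN hNY hδ1 Ψb Ψt hholb hboundb Pt Pb D' hPt hPb hD hcomp
end

section
/- For an integer n ≥ 1 and z ∈ ℂ \ {0}, let z^{1/n} := exp((1/n)·Log z) be the principal n-th root, and for A ∈ ℂ let m_{A,n}(w) := w·(1 + A wⁿ)^{−1/n}. (a) Let C̃, Ã ∈ ℂ with C̃ⁿ ≠ 1 and set d̃ := Ã/(1 − C̃ⁿ). Then there exists δ > 0 such that for all w with |w| < δ one has m_{d̃,n}(C̃ · m_{Ã,n}(w)) = C̃ · m_{d̃,n}(w). (b) Let C̄, Ā ∈ ℂ with C̄ⁿ ≠ 1 and set d̄ := Ā C̄ⁿ/(1 − C̄ⁿ). Then there exists δ > 0 such that for all w with |w| < δ one has m_{d̄,n}(m_{Ā,n}(C̄ w)) = C̄ · m_{d̄,n}(w). -/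
open Complex Filter Topology

/-- `m_{A,n}(w) = w (1 + A wⁿ)^{-1/n}`, with the principal branch
`z^{1/n} = exp ((1/n) Log z)`. -/
noncomputable def mmap (n : ℕ) (A : ℂ) (w : ℂ) : ℂ :=
  w * Complex.exp (-(1 / (n : ℂ)) * Complex.log (1 + A * w ^ n))

/-!
The maps `m_{A,n}` form, near the origin, a one-parameter group in `A`: since
`m_{A,n}(w)ⁿ = wⁿ / (1 + A wⁿ)`, one gets `m_{d,n} ∘ m_{A,n} = m_{A+d,n}` as long as the
principal logarithms of the factors involved add up, which holds near `0` because all of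
them stay in the right half-plane. Rescaling the variable rescales the parameter:
`m_{A,n}(C w) = C m_{A Cⁿ,n}(w)`. Hence `m_{d,n}(C m_{A,n}(w)) = C m_{A + d Cⁿ,n}(w)`, and the
choice of `d` in either part makes the parameter `A + d Cⁿ` equal to `d`.
-/

theorem Complex.log_mul_of_re_pos {x y : ℂ} (hx : 0 < x.re) (hy : 0 < y.re) :
    log (x * y) = log x + log y := by
  have hx' := abs_lt.1 (abs_arg_lt_pi_div_two_iff.2 (Or.inl hx))
  have hy' := abs_lt.1 (abs_arg_lt_pi_div_two_iff.2 (Or.inl hy))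
  refine log_mul (ne_of_apply_ne re hx.ne') (ne_of_apply_ne re hy.ne') ⟨?_, ?_⟩ <;>
    linarith [Real.pi_pos]

theorem mmap_pow {n : ℕ} (hn : n ≠ 0) (A w : ℂ) (ha : 1 + A * w ^ n ≠ 0) :
    mmap n A w ^ n = w ^ n / (1 + A * w ^ n) := by
  have hn' : (n : ℂ) ≠ 0 := Nat.cast_ne_zero.2 hn
  have hexp : (n : ℂ) * (-(1 / (n : ℂ)) * log (1 + A * w ^ n)) = -log (1 + A * w ^ n) := by
    field_simp
  rw [mmap, mul_pow, ← Complex.exp_nat_mul, hexp, Complex.exp_neg, Complex.exp_log ha,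
    div_eq_mul_inv]

theorem mmap_mul (n : ℕ) (A C w : ℂ) : mmap n A (C * w) = C * mmap n (A * C ^ n) w := by
  rw [mmap, mmap, mul_pow]
  ring_nf

theorem tendsto_one_add_mul_pow {n : ℕ} (hn : n ≠ 0) (A : ℂ) :
    Tendsto (fun w : ℂ => 1 + A * w ^ n) (𝓝 0) (𝓝 1) := by
  have h : Continuous fun w : ℂ => 1 + A * w ^ n := by fun_prop
  simpa [zero_pow hn] using h.tendsto 0

theorem eventually_mmap_mmap (n : ℕ) (A d : ℂ) :
    ∀ᶠ w in 𝓝 0, mmap n d (mmap n A w) = mmap n (A + d) w := by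
  rcases eq_or_ne n 0 with rfl | hn
  · simp [mmap]
  set a : ℂ → ℂ := fun w => 1 + A * w ^ n
  set b : ℂ → ℂ := fun w => 1 + (A + d) * w ^ n
  have ha : Tendsto a (𝓝 0) (𝓝 1) := tendsto_one_add_mul_pow hn A
  have hba : Tendsto (fun w => b w / a w) (𝓝 0) (𝓝 1) := by
    have h := (tendsto_one_add_mul_pow hn (A + d)).div ha one_ne_zero
    rwa [div_one] at h
  have hre : (0 : ℝ) < re 1 := by simp
  filter_upwards [(continuous_re.tendsto 1).comp ha |>.eventually_const_lt hre,
    (continuous_re.tendsto 1).comp hba |>.eventually_const_lt hre] with w ha_re hba_re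
  have ha0 : a w ≠ 0 := ne_of_apply_ne re ha_re.ne'
  have hlog : log (a w) + log (b w / a w) = log (b w) := by
    rw [← Complex.log_mul_of_re_pos ha_re hba_re, mul_div_cancel₀ _ ha0]
  have hpow : 1 + d * mmap n A w ^ n = b w / a w := by
    rw [mmap_pow hn A w ha0, eq_div_iff ha0, add_mul, mul_div_assoc', div_mul_cancel₀ _ ha0]
    ring
  calc mmap n d (mmap n A w)
      = w * (exp (-(1 / (n : ℂ)) * log (a w)) * exp (-(1 / (n : ℂ)) * log (b w / a w))) := by
        rw [mmap, hpow, mmap]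
        ring
    _ = mmap n (A + d) w := by
        rw [← Complex.exp_add, ← mul_add, hlog, mmap]

theorem eventually_mmap_mul_mmap {n : ℕ} {C A d : ℂ} (hd : A + d * C ^ n = d) :
    ∀ᶠ w in 𝓝 0, mmap n d (C * mmap n A w) = C * mmap n d w := by
  filter_upwards [eventually_mmap_mmap n A (d * C ^ n)] with w hw
  rw [mmap_mul, hw, hd]

theorem exists_pos_forall_norm_lt_of_eventually {E : Type*} [SeminormedAddCommGroup E]
    {p : E → Prop} (h : ∀ᶠ w in 𝓝 0, p w) : ∃ δ : ℝ, 0 < δ ∧ ∀ w, ‖w‖ < δ → p w := by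
  obtain ⟨δ, hδ, hp⟩ := Metric.eventually_nhds_iff.1 h
  exact ⟨δ, hδ, fun w hw => hp (by simpa using hw)⟩

theorem stmt_12_general (n : ℕ) :
    (∀ Ct At : ℂ, Ct ^ n ≠ 1 →
      ∃ δ : ℝ, 0 < δ ∧ ∀ w : ℂ, ‖w‖ < δ →
        mmap n (At / (1 - Ct ^ n)) (Ct * mmap n At w) =
          Ct * mmap n (At / (1 - Ct ^ n)) w) ∧
    (∀ Cb Ab : ℂ, Cb ^ n ≠ 1 →
      ∃ δ : ℝ, 0 < δ ∧ ∀ w : ℂ, ‖w‖ < δ →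
        mmap n (Ab * Cb ^ n / (1 - Cb ^ n)) (mmap n Ab (Cb * w)) =
          Cb * mmap n (Ab * Cb ^ n / (1 - Cb ^ n)) w) := by
  constructor
  · intro C A hC
    have hC' : 1 - C ^ n ≠ 0 := sub_ne_zero.2 hC.symm
    refine exists_pos_forall_norm_lt_of_eventually (eventually_mmap_mul_mmap ?_)
    field_simp
    ring
  · intro C A hC
    have hC' : 1 - C ^ n ≠ 0 := sub_ne_zero.2 hC.symm
    have hd : A * C ^ n + A * C ^ n / (1 - C ^ n) * C ^ n = A * C ^ n / (1 - C ^ n) := by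
      field_simp
      ring
    refine exists_pos_forall_norm_lt_of_eventually
      ((eventually_mmap_mul_mmap hd).mono fun w hw => ?_)
    rwa [mmap_mul]

/-- The explicit linearizing maps of the renormalized return maps:
(a) `h̃⁰ = m_{d̃,n}` with `d̃ = Ã/(1 - C̃ⁿ)` solves `h ∘ L_{C̃} ∘ m_{Ã,n} = L_{C̃} ∘ h`;
(b) `h̄⁰ = m_{d̄,n}` with `d̄ = Ā C̄ⁿ/(1 - C̄ⁿ)` solves `h ∘ m_{Ā,n} ∘ L_{C̄} = L_{C̄} ∘ h`,
near the origin. -/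
theorem stmt_12 (n : ℕ) (hn : 1 ≤ n) :
    (∀ Ct At : ℂ, Ct ^ n ≠ 1 →
      ∃ δ : ℝ, 0 < δ ∧ ∀ w : ℂ, ‖w‖ < δ →
        mmap n (At / (1 - Ct ^ n)) (Ct * mmap n At w) =
          Ct * mmap n (At / (1 - Ct ^ n)) w) ∧
    (∀ Cb Ab : ℂ, Cb ^ n ≠ 1 →
      ∃ δ : ℝ, 0 < δ ∧ ∀ w : ℂ, ‖w‖ < δ →
        mmap n (Ab * Cb ^ n / (1 - Cb ^ n)) (mmap n Ab (Cb * w)) =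
          Cb * mmap n (Ab * Cb ^ n / (1 - Cb ^ n)) w) :=
  stmt_12_general n
end

section
/- Let n ≥ 1 be an integer and let d̄, ē, d̃, ẽ, F, G ∈ ℂ with d̄ ē ≠ 1 satisfy the system: 1 − d̃ ẽ = Fⁿ Gⁿ/(1 − d̄ ē), ẽ = −Fⁿ ē/(1 − d̄ ē), and d̃ = −Gⁿ d̄/(1 − d̄ ē). Then d̃ ẽ = d̄ ē and Fⁿ Gⁿ = (1 − d̄ ē)². Moreover, suppose C̄, C̃, β ∈ ℂ \ {0} with β = (C̄ C̃)^{−1}, C̄ⁿ ≠ 1 and C̃ⁿ ≠ 1, and suppose d̃ = Ã/(1 − C̃ⁿ), ẽ = B̃/(1 − C̄ⁿ), d̄ = Ā C̄ⁿ/(1 − C̄ⁿ) and ē = (C̃ β)ⁿ B̄/(1 − C̃ⁿ) for some Ã, B̃, Ā, B̄ ∈ ℂ. Then d̃ ẽ = d̄ ē holds if and only if Ã B̃ = Ā B̄. -/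
/-! Writing `s = d̄ē` and `P = FⁿGⁿ`, the last two equations give `d̃ẽ = P s / (1 - s)²`;
adding this to the first gives `1 = P / (1 - s)²`, so `P = (1 - s)²` and then `d̃ẽ = s`.
For the second part, `β = (C̄C̃)⁻¹` makes `(C̃β)ⁿ = C̄⁻ⁿ`, which cancels the factor `C̄ⁿ` of `d̄`,
so both products have the same nonzero denominator `(1 - C̃ⁿ)(1 - C̄ⁿ)`. -/

theorem mul_eq_and_mul_eq_sq_of_compatibility {K : Type*} [Field K] {d e x y p q : K}
    (hs : 1 - d * e ≠ 0) (h1 : 1 - x * y = p * q / (1 - d * e))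
    (h2 : y = -(p * e) / (1 - d * e)) (h3 : x = -(q * d) / (1 - d * e)) :
    x * y = d * e ∧ p * q = (1 - d * e) ^ 2 := by
  have hxy : x * y * (1 - d * e) ^ 2 = p * q * (d * e) := by
    rw [h2, h3]; field_simp
  have hpq : p * q = (1 - d * e) ^ 2 := by
    rw [eq_div_iff hs] at h1
    linear_combination -(1 - d * e) * h1 - hxy
  refine ⟨mul_right_cancel₀ (pow_ne_zero 2 hs) ?_, hpq⟩
  linear_combination hxy + d * e * hpq

theorem mul_mul_inv_pow {G : Type*} [CommGroupWithZero G] {D : G} (C : G) (hD : D ≠ 0)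
    (n : ℕ) : (D * (C * D)⁻¹) ^ n = (C ^ n)⁻¹ := by
  rw [mul_inv_rev, mul_inv_cancel_left₀ hD, inv_pow]

theorem div_mul_div_eq_mul_div_mul_inv_div_iff {K : Type*} [Field K] {c u : K} (hc : c ≠ 0)
    (hc1 : 1 - c ≠ 0) (hu : u ≠ 0) (a b a' b' : K) :
    a / u * (b / (1 - c)) = a' * c / (1 - c) * (c⁻¹ * b' / u) ↔ a * b = a' * b' := by
  field_simp

theorem stmt_13_general (n : ℕ) (db eb dt et F G : ℂ)
    (hde : db * eb ≠ 1)
    (h1 : 1 - dt * et = F ^ n * G ^ n / (1 - db * eb))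
    (h2 : et = -(F ^ n * eb) / (1 - db * eb))
    (h3 : dt = -(G ^ n * db) / (1 - db * eb)) :
    (dt * et = db * eb ∧ F ^ n * G ^ n = (1 - db * eb) ^ 2) ∧
    (∀ Cb Ct β At Bt Ab Bb : ℂ,
      Cb ≠ 0 → Ct ≠ 0 → β ≠ 0 → β = (Cb * Ct)⁻¹ → Cb ^ n ≠ 1 → Ct ^ n ≠ 1 →
      dt = At / (1 - Ct ^ n) → et = Bt / (1 - Cb ^ n) →
      db = Ab * Cb ^ n / (1 - Cb ^ n) → eb = (Ct * β) ^ n * Bb / (1 - Ct ^ n) →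
      (dt * et = db * eb ↔ At * Bt = Ab * Bb)) := by
  refine ⟨mul_eq_and_mul_eq_sq_of_compatibility (sub_ne_zero.mpr hde.symm) h1 h2 h3, ?_⟩
  intro Cb Ct β At Bt Ab Bb hCb hCt _ hβ hCbn hCtn hdt het hdb heb
  rw [hdt, het, hdb, heb, hβ, mul_mul_inv_pow Cb hCt]
  exact div_mul_div_eq_mul_div_mul_inv_div_iff (pow_ne_zero n hCb)
    (sub_ne_zero.mpr hCbn.symm) (sub_ne_zero.mpr hCtn.symm) At Bt Ab Bb

/-- Algebraic content of the compatibility condition for moduli of the form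
`(m_{A,n}, L_β ∘ T_{B,n})`: the system expressing
`T_{ẽ,n} ∘ m_{-d̃,n} = L_{FG} ∘ m_{Gⁿd̄,n} ∘ T_{-ē/Gⁿ,n}` forces `d̃ẽ = d̄ē` and
`FⁿGⁿ = (1 - d̄ē)²`; moreover, with the explicit values of `d̃, ẽ, d̄, ē`, the
relation `d̃ẽ = d̄ē` is equivalent to `ÃB̃ = ĀB̄`. -/
theorem stmt_13 (n : ℕ) (hn : 1 ≤ n) (db eb dt et F G : ℂ)
    (hde : db * eb ≠ 1)
    (h1 : 1 - dt * et = F ^ n * G ^ n / (1 - db * eb))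
    (h2 : et = -(F ^ n * eb) / (1 - db * eb))
    (h3 : dt = -(G ^ n * db) / (1 - db * eb)) :
    (dt * et = db * eb ∧ F ^ n * G ^ n = (1 - db * eb) ^ 2) ∧
    (∀ Cb Ct β At Bt Ab Bb : ℂ,
      Cb ≠ 0 → Ct ≠ 0 → β ≠ 0 → β = (Cb * Ct)⁻¹ → Cb ^ n ≠ 1 → Ct ^ n ≠ 1 →
      dt = At / (1 - Ct ^ n) → et = Bt / (1 - Cb ^ n) →
      db = Ab * Cb ^ n / (1 - Cb ^ n) → eb = (Ct * β) ^ n * Bb / (1 - Ct ^ n) →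
      (dt * et = db * eb ↔ At * Bt = Ab * Bb)) :=
  stmt_13_general n db eb dt et F G hde h1 h2 h3
end
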